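/- Let G₁ be a k × m random matrix and G₂ a k × n random matrix such that G₁ and G₂ are independent, E[G₁ᵀ G₁] = I_m, and E[G₂ᵀ G₂] = I_n. Then for all fixed vectors a, a' ∈ ℝ^m and b, b' ∈ ℝ^n, E[⟨G₁ a bᵀ G₂ᵀ, G₁ a' b'ᵀ G₂ᵀ⟩_F] = ⟨a bᵀ, a' b'ᵀ⟩_F = (a · a')(b · b'); that is, the Frobenius inner product of the doubly projected rank-one matrices is an unbiased estimator of the Frobenius inner product of the original rank-one matrices. -/

import Mathlib

open MeasureTheory ProbabilityTheory Matrix Finset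

local instance matrixMeasurableSpace {ι κ α : Type*} [MeasurableSpace α] :
    MeasurableSpace (Matrix ι κ α) :=
  inferInstanceAs (MeasurableSpace (ι → κ → α))

/-!
The projected matrix `G₁ (a bᵀ) G₂ᵀ` is again rank one, namely `(G₁ a)(G₂ b)ᵀ`, so the Frobenius
product of two such matrices factors as `(G₁ a ⬝ᵥ G₁ a') (G₂ b ⬝ᵥ G₂ b')`. The two factors are
independent, so the expectation splits, and each factor is the bilinear form
`a ⬝ᵥ (G₁ᵀ G₁) a'`, whose mean is `a ⬝ᵥ E[G₁ᵀ G₁] a' = a ⬝ᵥ a'`.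
-/

namespace Matrix

variable {R k k' m n : Type*} [CommSemiring R] [Fintype m] [Fintype n]

theorem mul_vecMulVec_mul_transpose (A : Matrix k m R) (B : Matrix k' n R) (a : m → R)
    (b : n → R) : A * vecMulVec a b * Bᵀ = vecMulVec (A *ᵥ a) (B *ᵥ b) := by
  rw [mul_vecMulVec, vecMulVec_mul, vecMul_transpose]

theorem sum_vecMulVec_mul_vecMulVec (a : m → R) (b : n → R) (a' : m → R) (b' : n → R) :
    ∑ i, ∑ j, vecMulVec a b i j * vecMulVec a' b' i j = (a ⬝ᵥ a') * (b ⬝ᵥ b') := by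
  simp only [vecMulVec_apply, dotProduct, Finset.sum_mul_sum]
  exact Finset.sum_congr rfl fun i _ => Finset.sum_congr rfl fun j _ => by ring

theorem mulVec_dotProduct_mulVec [Fintype k] (G : Matrix k m R) (a a' : m → R) :
    G *ᵥ a ⬝ᵥ G *ᵥ a' = a ⬝ᵥ (Gᵀ * G) *ᵥ a' := by
  rw [dotProduct_mulVec, ← vecMul_transpose, vecMul_vecMul, ← dotProduct_mulVec]

end Matrix

section Moments

variable {Ω k m n : Type*} [MeasurableSpace Ω] {μ : Measure Ω}

theorem integrable_transpose_mul_self_apply [Fintype k] {G : Ω → Matrix k m ℝ}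
    (hG : ∀ i j j', Integrable (fun ω => G ω i j * G ω i j') μ) (j j' : m) :
    Integrable (fun ω => ((G ω)ᵀ * G ω) j j') μ := by
  simp only [mul_apply, transpose_apply]
  exact integrable_finsetSum _ fun i _ => hG i j j'

theorem integrable_dotProduct_mulVec [Fintype m] [Fintype n] {M : Ω → Matrix m n ℝ}
    (hM : ∀ i j, Integrable (fun ω => M ω i j) μ) (a : m → ℝ) (b : n → ℝ) :
    Integrable (fun ω => a ⬝ᵥ M ω *ᵥ b) μ := by
  simp only [dotProduct, mulVec, Finset.mul_sum]
  exact integrable_finsetSum _ fun i _ => integrable_finsetSum _ fun j _ =>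
    ((hM i j).mul_const _).const_mul _

theorem integral_dotProduct_mulVec [Fintype m] [Fintype n] {M : Ω → Matrix m n ℝ}
    (hM : ∀ i j, Integrable (fun ω => M ω i j) μ) (a : m → ℝ) (b : n → ℝ) :
    ∫ ω, a ⬝ᵥ M ω *ᵥ b ∂μ = a ⬝ᵥ (of fun i j => ∫ ω, M ω i j ∂μ) *ᵥ b := by
  simp only [dotProduct, mulVec, of_apply, Finset.mul_sum]
  rw [integral_finsetSum _ fun i _ => integrable_finsetSum _ fun j _ =>
    ((hM i j).mul_const _).const_mul _]
  refine Finset.sum_congr rfl fun i _ => ?_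
  rw [integral_finsetSum _ fun j _ => ((hM i j).mul_const _).const_mul _]
  exact Finset.sum_congr rfl fun j _ => by rw [integral_const_mul, integral_mul_const]

theorem integrable_mulVec_dotProduct_mulVec [Fintype k] [Fintype m] {G : Ω → Matrix k m ℝ}
    (hG : ∀ i j j', Integrable (fun ω => G ω i j * G ω i j') μ) (a a' : m → ℝ) :
    Integrable (fun ω => G ω *ᵥ a ⬝ᵥ G ω *ᵥ a') μ := by
  simp only [mulVec_dotProduct_mulVec]
  exact integrable_dotProduct_mulVec (integrable_transpose_mul_self_apply hG) a a'

theorem integral_mulVec_dotProduct_mulVec [Fintype k] [Fintype m] [DecidableEq m]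
    {G : Ω → Matrix k m ℝ}
    (hG : ∀ i j j', Integrable (fun ω => G ω i j * G ω i j') μ)
    (hE : ∀ j j', ∫ ω, ((G ω)ᵀ * G ω) j j' ∂μ = (1 : Matrix m m ℝ) j j') (a a' : m → ℝ) :
    ∫ ω, G ω *ᵥ a ⬝ᵥ G ω *ᵥ a' ∂μ = a ⬝ᵥ a' := by
  have hmean : (of fun j j' => ∫ ω, ((G ω)ᵀ * G ω) j j' ∂μ) = 1 := ext hE
  simp only [mulVec_dotProduct_mulVec]
  rw [integral_dotProduct_mulVec (integrable_transpose_mul_self_apply hG), hmean, one_mulVec]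

theorem measurable_mulVec_dotProduct_mulVec [Fintype k] [Fintype m] (a a' : m → ℝ) :
    Measurable fun G : Matrix k m ℝ => G *ᵥ a ⬝ᵥ G *ᵥ a' := by
  simp only [dotProduct, mulVec]
  fun_prop

end Moments

theorem double_random_projection_rank_one_unbiased_general
    {k m n : ℕ} {Ω : Type*} [MeasurableSpace Ω] (μ : Measure Ω)
    (G₁ : Ω → Matrix (Fin k) (Fin m) ℝ) (G₂ : Ω → Matrix (Fin k) (Fin n) ℝ)
    (hindep : IndepFun G₁ G₂ μ)
    (hint₁ : ∀ (i : Fin k) (j j' : Fin m), Integrable (fun ω => G₁ ω i j * G₁ ω i j') μ)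
    (hint₂ : ∀ (i : Fin k) (j j' : Fin n), Integrable (fun ω => G₂ ω i j * G₂ ω i j') μ)
    (hE₁ : ∀ i j : Fin m, ∫ ω, ((G₁ ω)ᵀ * G₁ ω) i j ∂μ = (1 : Matrix (Fin m) (Fin m) ℝ) i j)
    (hE₂ : ∀ i j : Fin n, ∫ ω, ((G₂ ω)ᵀ * G₂ ω) i j ∂μ = (1 : Matrix (Fin n) (Fin n) ℝ) i j)
    (a a' : Fin m → ℝ) (b b' : Fin n → ℝ) :
    ∫ ω, ∑ i : Fin k, ∑ j : Fin k,
        (G₁ ω * vecMulVec a b * (G₂ ω)ᵀ) i j * (G₁ ω * vecMulVec a' b' * (G₂ ω)ᵀ) i j ∂μ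
      = ∑ i : Fin m, ∑ j : Fin n, vecMulVec a b i j * vecMulVec a' b' i j ∧
    ∑ i : Fin m, ∑ j : Fin n, vecMulVec a b i j * vecMulVec a' b' i j
      = (a ⬝ᵥ a') * (b ⬝ᵥ b') := by
  refine ⟨?_, sum_vecMulVec_mul_vecMulVec a b a' b'⟩
  have hfactors : IndepFun (fun ω => G₁ ω *ᵥ a ⬝ᵥ G₁ ω *ᵥ a')
      (fun ω => G₂ ω *ᵥ b ⬝ᵥ G₂ ω *ᵥ b') μ :=
    hindep.comp (measurable_mulVec_dotProduct_mulVec a a')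
      (measurable_mulVec_dotProduct_mulVec b b')
  simp only [mul_vecMulVec_mul_transpose, sum_vecMulVec_mul_vecMulVec]
  rw [hfactors.integral_fun_mul_eq_mul_integral
      (integrable_mulVec_dotProduct_mulVec hint₁ a a').aestronglyMeasurable
      (integrable_mulVec_dotProduct_mulVec hint₂ b b').aestronglyMeasurable,
    integral_mulVec_dotProduct_mulVec hint₁ hE₁, integral_mulVec_dotProduct_mulVec hint₂ hE₂]

/-- **Unbiasedness of double random projections of rank-one matrices.**
Let `G₁` (`k × m`) and `G₂` (`k × n`) be independent random matrices with
integrable entrywise second moments, `E[G₁ᵀ G₁] = Iₘ` and `E[G₂ᵀ G₂] = Iₙ`.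
Then for all fixed `a, a' ∈ ℝ^m`, `b, b' ∈ ℝ^n`,
`E[⟨G₁ a bᵀ G₂ᵀ, G₁ a' b'ᵀ G₂ᵀ⟩_F] = ⟨a bᵀ, a' b'ᵀ⟩_F = (a ⬝ᵥ a') (b ⬝ᵥ b')`. -/
theorem double_random_projection_rank_one_unbiased
    {k m n : ℕ} {Ω : Type*} [MeasurableSpace Ω] (μ : Measure Ω) [IsProbabilityMeasure μ]
    (G₁ : Ω → Matrix (Fin k) (Fin m) ℝ) (G₂ : Ω → Matrix (Fin k) (Fin n) ℝ)
    (hindep : IndepFun G₁ G₂ μ)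
    (hmeas₁ : Measurable G₁) (hmeas₂ : Measurable G₂)
    (hint₁ : ∀ (i : Fin k) (j j' : Fin m), Integrable (fun ω => G₁ ω i j * G₁ ω i j') μ)
    (hint₂ : ∀ (i : Fin k) (j j' : Fin n), Integrable (fun ω => G₂ ω i j * G₂ ω i j') μ)
    (hE₁ : ∀ i j : Fin m, ∫ ω, ((G₁ ω)ᵀ * G₁ ω) i j ∂μ = (1 : Matrix (Fin m) (Fin m) ℝ) i j)
    (hE₂ : ∀ i j : Fin n, ∫ ω, ((G₂ ω)ᵀ * G₂ ω) i j ∂μ = (1 : Matrix (Fin n) (Fin n) ℝ) i j)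
    (a a' : Fin m → ℝ) (b b' : Fin n → ℝ) :
    ∫ ω, ∑ i : Fin k, ∑ j : Fin k,
        (G₁ ω * vecMulVec a b * (G₂ ω)ᵀ) i j * (G₁ ω * vecMulVec a' b' * (G₂ ω)ᵀ) i j ∂μ
      = ∑ i : Fin m, ∑ j : Fin n, vecMulVec a b i j * vecMulVec a' b' i j ∧
    ∑ i : Fin m, ∑ j : Fin n, vecMulVec a b i j * vecMulVec a' b' i j
      = (a ⬝ᵥ a') * (b ⬝ᵥ b') :=
  double_random_projection_rank_one_unbiased_general μ G₁ G₂ hindep hint₁ hint₂ hE₁ hE₂ a a' b b'
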